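/- Let ε, κ > 0 and suppose the p-dimensional vector v satisfies ‖v‖²_{X} ≥ ‖v‖²_{Γ} - M_p √p ‖v‖, where M_p ≤ ε, ‖v‖ ≤ κ^{-1/2}‖v‖_Γ, and ‖v‖²_X ≤ 4λM (s/κ)^{1/2} ‖v‖_Γ with ε = λ(s/p)^{1/2}. Then ‖v‖²_Γ ≤ 4(1/2 + 2M)² λ² s/κ. -/

import Mathlib

/-! Writing `A = λ (1 + 4M) √(s/κ)`, the lower and upper bounds on `‖v‖²_X` combine to
`‖v‖²_Γ ≤ A ‖v‖_Γ`: the deviation term `M_p √p ‖v‖` is at most `λ √(s/κ) ‖v‖_Γ`, because the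
choice `ε = λ √(s/p)` makes `ε √p = λ √s` and `‖v‖ ≤ κ^{-1/2} ‖v‖_Γ`. Dividing by `‖v‖_Γ` gives
`‖v‖_Γ ≤ A`, and `A² = 4 (1/2 + 2M)² λ² s/κ`. -/

theorem Real.rpow_neg_one_div_two {x : ℝ} (hx : 0 ≤ x) : x ^ (-(1 : ℝ) / 2) = (√x)⁻¹ := by
  rw [neg_div, Real.rpow_neg hx, ← Real.sqrt_eq_rpow]

theorem sq_le_sq_of_sq_le_mul {a b : ℝ} (ha : 0 ≤ a) (h : a ^ 2 ≤ b * a) : a ^ 2 ≤ b ^ 2 := by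
  rcases ha.eq_or_lt with rfl | ha
  · simpa using sq_nonneg b
  · have hab : a ≤ b := le_of_mul_le_mul_right (by nlinarith) ha
    exact pow_le_pow_left₀ ha.le hab 2

theorem deviation_le_of_le_lam_mul_sqrt {p s : ℕ} {κ lam Mp a v : ℝ} (hp : 0 < p) (hκ : 0 < κ)
    (hMp : 0 ≤ Mp) (hMpε : Mp ≤ lam * √((s : ℝ) / p)) (hv : v ≤ κ ^ (-(1 : ℝ) / 2) * a)
    (ha : 0 ≤ a) :
    Mp * √p * v ≤ lam * √((s : ℝ) / κ) * a := by
  have hsqrt_p : √(p : ℝ) ≠ 0 := by positivity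
  calc Mp * √p * v ≤ Mp * √p * (κ ^ (-(1 : ℝ) / 2) * a) := by gcongr
    _ ≤ lam * √((s : ℝ) / p) * √p * (κ ^ (-(1 : ℝ) / 2) * a) := by gcongr
    _ = lam * √((s : ℝ) / κ) * a := by
      rw [Real.rpow_neg_one_div_two hκ.le, Real.sqrt_div' _ hκ.le,
        Real.sqrt_div' _ (Nat.cast_nonneg p)]
      field_simp

theorem lasso_prediction_norm_bound_general
    (p s : ℕ) (hp : 0 < p) (ε κ lam M Mp : ℝ)
    (hκ : 0 < κ) (hMp : 0 ≤ Mp)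
    (normX2 normΓ normv : ℝ) (hnormΓ : 0 ≤ normΓ)
    (hε : ε = lam * Real.sqrt ((s : ℝ) / p))
    (hMpε : Mp ≤ ε)
    (hlower : normX2 ≥ normΓ ^ 2 - Mp * Real.sqrt p * normv)
    (hcomp : normv ≤ κ ^ (-(1 : ℝ) / 2) * normΓ)
    (hupper : normX2 ≤ 4 * lam * M * Real.sqrt ((s : ℝ) / κ) * normΓ) :
    normΓ ^ 2 ≤ 4 * (1 / 2 + 2 * M) ^ 2 * lam ^ 2 * s / κ := by
  have hdev := deviation_le_of_le_lam_mul_sqrt hp hκ hMp (hε ▸ hMpε) hcomp hnormΓ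
  have hquad : normΓ ^ 2 ≤ (lam * (1 + 4 * M) * √((s : ℝ) / κ)) * normΓ := by linarith
  calc normΓ ^ 2 ≤ (lam * (1 + 4 * M) * √((s : ℝ) / κ)) ^ 2 :=
        sq_le_sq_of_sq_le_mul hnormΓ hquad
    _ = 4 * (1 / 2 + 2 * M) ^ 2 * lam ^ 2 * s / κ := by
      rw [mul_pow, Real.sq_sqrt (by positivity)]
      ring

theorem lasso_prediction_norm_bound
    (p s : ℕ) (hp : 0 < p) (ε κ lam M Mp : ℝ)
    (hκ : 0 < κ) (hlam : 0 ≤ lam) (hM : 0 ≤ M) (hMp : 0 ≤ Mp)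
    (normX2 normΓ normv : ℝ) (hnormX2 : 0 ≤ normX2) (hnormΓ : 0 ≤ normΓ)
    (hnormv : 0 ≤ normv)
    (hε : ε = lam * Real.sqrt ((s : ℝ) / p))
    (hMpε : Mp ≤ ε)
    (hlower : normX2 ≥ normΓ ^ 2 - Mp * Real.sqrt p * normv)
    (hcomp : normv ≤ κ ^ (-(1 : ℝ) / 2) * normΓ)
    (hupper : normX2 ≤ 4 * lam * M * Real.sqrt ((s : ℝ) / κ) * normΓ) :
    normΓ ^ 2 ≤ 4 * (1 / 2 + 2 * M) ^ 2 * lam ^ 2 * s / κ :=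
  lasso_prediction_norm_bound_general p s hp ε κ lam M Mp hκ hMp normX2 normΓ normv hnormΓ hε hMpε
    hlower hcomp hupper
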